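/- arXiv:2110.15378 — 6 statements merged into one kernel-verified Lean document; each statement's English description precedes it below -/
import Mathlib

section
/- Let p > 1 be a real number and s ∈ ℂ with p^s ≠ 1 and p^s ≠ p. Then 1/(1 − p^{1−s}) + (p^s/(1 − p^s))·(1 + ((p−1)/p)·(p^{1−s}/(1 − p^{1−s}))) = 0. In other words, the analytic continuation of the regularized L² inner product ⟨φ_μ|φ_ν⟩ = Σ_{i≥0} p^{(1−s)i} + Σ_{i≥1} p^{si}(1 + ((p−1)/p)Σ_{j≥1} p^{(1−s)j}) of two plane waves on the Bruhat–Tits tree, where s = μ* + ν, vanishes whenever s is not at the special points with p^s ∈ {1, p}. -/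
/-- Vanishing of the analytically continued regularized L² inner product of plane waves
on the Bruhat–Tits tree, for `s = μ* + ν` away from the special points `p^s ∈ {1, p}`. -/
theorem stmt_1 (p : ℝ) (hp : 1 < p) (s : ℂ)
    (h1 : (p : ℂ) ^ s ≠ 1) (h2 : (p : ℂ) ^ s ≠ (p : ℂ)) :
    1 / (1 - (p : ℂ) ^ (1 - s)) +
      ((p : ℂ) ^ s / (1 - (p : ℂ) ^ s)) *
        (1 + (((p : ℂ) - 1) / (p : ℂ)) * ((p : ℂ) ^ (1 - s) / (1 - (p : ℂ) ^ (1 - s)))) = 0 := by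
  have hp0 : (p : ℂ) ≠ 0 := by
    exact_mod_cast ne_of_gt (lt_trans one_pos hp)
  have ha0 : (p : ℂ) ^ s ≠ 0 := by
    rw [Complex.cpow_def_of_ne_zero hp0]; exact Complex.exp_ne_zero _
  rw [Complex.cpow_sub _ _ hp0, Complex.cpow_one]
  set a := (p : ℂ) ^ s with ha
  have h3 : 1 - (p : ℂ) / a ≠ 0 := by
    intro h
    apply h2
    have h' : (p : ℂ) / a = 1 := by linear_combination -h
    rw [div_eq_one_iff_eq ha0] at h'
    exact h'.symm
  have h4 : 1 - a ≠ 0 := sub_ne_zero.mpr (Ne.symm h1)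
  have hap : a - (p : ℂ) ≠ 0 := sub_ne_zero.mpr h2
  field_simp [hap]
  ring
end

section
/- Let p > 1 be a real number, let μ ∈ ℝ with 0 ≤ μ ≤ 1, and let v ∈ ℝ with v ≥ (√p − 1)²/2. Set λ_μ := p^μ + p^{1−μ} − p − 1 (real powers). Then every nonzero r ∈ ℂ satisfying r + r⁻¹ − 2 = 2λ_μ/v has |r| = 1. -/
/-! Writing `a = p ^ μ`, `b = p ^ (1 - μ)`, so that `a * b = p` and `a, b ≥ 1`, the inequalities
`(a - 1) (b - 1) ≥ 0` and AM–GM give `-(√p - 1) ^ 2 ≤ λ_μ ≤ 0`. The bound on `v` then puts the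
right-hand side of the mode equation in `[-4, 0]`, i.e. `r + r⁻¹ = t` for a real `t ∈ [-2, 2]`.
The two roots of `z ^ 2 - t z + 1` are then a pair of conjugate complex numbers of product `1`. -/

open ComplexConjugate

noncomputable def bruhatTitsEigenvalue (p μ : ℝ) : ℝ :=
  p ^ μ + p ^ (1 - μ) - p - 1

lemma bruhatTitsEigenvalue_nonpos {p μ : ℝ} (hp : 1 ≤ p) (hμ0 : 0 ≤ μ) (hμ1 : μ ≤ 1) :
    bruhatTitsEigenvalue p μ ≤ 0 := by
  have ha : 1 ≤ p ^ μ := Real.one_le_rpow hp hμ0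
  have hb : 1 ≤ p ^ (1 - μ) := Real.one_le_rpow hp (sub_nonneg.mpr hμ1)
  have hab : p ^ μ * p ^ (1 - μ) = p := by
    rw [← Real.rpow_add (by linarith), add_sub_cancel, Real.rpow_one]
  unfold bruhatTitsEigenvalue
  nlinarith [mul_nonneg (sub_nonneg.mpr ha) (sub_nonneg.mpr hb)]

lemma neg_sq_sqrt_sub_one_le_bruhatTitsEigenvalue {p : ℝ} (hp : 0 < p) (μ : ℝ) :
    -(√p - 1) ^ 2 ≤ bruhatTitsEigenvalue p μ := by
  have hab : √(p ^ μ) * √(p ^ (1 - μ)) = √p := by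
    rw [← Real.sqrt_mul (by positivity), ← Real.rpow_add hp, add_sub_cancel, Real.rpow_one]
  have amgm := two_mul_le_add_sq (√(p ^ μ)) (√(p ^ (1 - μ)))
  rw [Real.sq_sqrt (by positivity), Real.sq_sqrt (by positivity), mul_assoc, hab] at amgm
  unfold bruhatTitsEigenvalue
  nlinarith [Real.sq_sqrt hp.le]

theorem Complex.norm_eq_one_of_add_inv_eq_ofReal {r : ℂ} (hr : r ≠ 0) {t : ℝ} (ht : |t| ≤ 2)
    (h : r + r⁻¹ = t) : ‖r‖ = 1 := by
  set w : ℂ := ⟨t / 2, √(1 - t ^ 2 / 4)⟩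
  have hw : Complex.normSq w = 1 := by
    have : t ^ 2 ≤ 2 ^ 2 := sq_le_sq' (abs_le.mp ht).1 (abs_le.mp ht).2
    rw [Complex.normSq_mk, ← sq, ← sq, Real.sq_sqrt (by linarith)]
    ring
  have hroots : (r - w) * (r - conj w) = 0 := by
    have hsum : w + conj w = t := by rw [Complex.add_conj]; simp only [w]; push_cast; ring
    have hprod : w * conj w = 1 := by rw [Complex.mul_conj, hw, Complex.ofReal_one]
    calc (r - w) * (r - conj w) = r * (r + r⁻¹ - (w + conj w)) + (w * conj w - 1) := by
          field_simp; ring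
      _ = 0 := by rw [h, hsum, hprod]; ring
  have hnorm : ‖w‖ = 1 := by rw [Complex.norm_def, hw, Real.sqrt_one]
  rcases mul_eq_zero.mp hroots with hr' | hr'
  · rw [sub_eq_zero.mp hr', hnorm]
  · rw [sub_eq_zero.mp hr', Complex.norm_conj, hnorm]

/-- Unit interval locus: for `p > 1`, `μ ∈ [0,1]`, `v ≥ (√p - 1)²/2`, every nonzero
complex solution of the mode equation `r + r⁻¹ - 2 = 2λ_μ/v` has modulus one. -/
theorem stmt_4 (p : ℝ) (hp : 1 < p) (μ : ℝ) (hμ0 : 0 ≤ μ) (hμ1 : μ ≤ 1)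
    (v : ℝ) (hv : (Real.sqrt p - 1) ^ 2 / 2 ≤ v)
    (r : ℂ) (hr : r ≠ 0)
    (heq : r + r⁻¹ - 2 = 2 * ((p ^ μ + p ^ (1 - μ) - p - 1 : ℝ) : ℂ) / (v : ℂ)) :
    ‖r‖ = 1 := by
  have hupper := bruhatTitsEigenvalue_nonpos hp.le hμ0 hμ1
  have hlower := neg_sq_sqrt_sub_one_le_bruhatTitsEigenvalue (p := p) (by linarith) μ
  have hv0 : 0 < v := by
    have : 1 < √p := Real.lt_sqrt_of_sq_lt (by linarith)
    nlinarith
  set c := 2 * bruhatTitsEigenvalue p μ / v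
  have hc_lower : -4 ≤ c := by rw [le_div_iff₀ hv0]; linarith
  have hc_upper : c ≤ 0 := div_nonpos_of_nonpos_of_nonneg (by linarith) hv0.le
  refine Complex.norm_eq_one_of_add_inv_eq_ofReal hr (t := 2 + c) ?_ ?_
  · exact abs_le.mpr ⟨by linarith, by linarith⟩
  · simp only [c, bruhatTitsEigenvalue]
    push_cast at heq ⊢
    linear_combination heq
end

section
/- Let p > 1 be a real number, let μ = 1/2 + i·t with t ∈ ℝ, and let v ∈ ℝ with v ≥ (√p + 1)²/2. Set λ_μ := p^μ + p^{1−μ} − p − 1 (complex powers of the positive real base p). Then every nonzero r ∈ ℂ satisfying r + r⁻¹ − 2 = 2λ_μ/v has |r| = 1. -/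
open Complex

/-- If `r + r⁻¹` equals a real number of absolute value at most 2, then `|r| = 1`. -/
lemma aux_key (c : ℝ) (hc1 : -2 ≤ c) (hc2 : c ≤ 2) (r : ℂ) (hr : r ≠ 0)
    (h : r + r⁻¹ = (c : ℂ)) : ‖r‖ = 1 := by
  have h1 : r ^ 2 + 1 = (c : ℂ) * r := by
    field_simp at h
    linear_combination h
  have h2 : (starRingEnd ℂ r) ^ 2 + 1 = (c : ℂ) * starRingEnd ℂ r := by
    have := congrArg (starRingEnd ℂ) h1
    simpa [map_add, map_mul, map_pow, Complex.conj_ofReal] using this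
  have h3 : (r - starRingEnd ℂ r) * (r + starRingEnd ℂ r - (c : ℂ)) = 0 := by
    linear_combination h1 - h2
  rcases mul_eq_zero.mp h3 with h4 | h4
  · -- r is real
    have hre : r = (r.re : ℂ) := by
      have := sub_eq_zero.mp h4
      exact (Complex.conj_eq_iff_re.mp this.symm).symm
    set x := r.re with hx
    have hx1 : x ^ 2 + 1 = c * x := by
      have := h1
      rw [hre] at this
      exact_mod_cast this
    have key : (x ^ 2 - 1) ^ 2 = (c ^ 2 - 4) * x ^ 2 := by
      linear_combination (x ^ 2 + 1 + c * x) * hx1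
    have h7 : (x ^ 2 - 1) ^ 2 ≤ 0 := by
      nlinarith [mul_nonneg (mul_nonneg (sub_nonneg.mpr hc2)
        (by linarith : (0:ℝ) ≤ c + 2)) (sq_nonneg x)]
    have h8 : x ^ 2 - 1 = 0 := by
      have := le_antisymm h7 (sq_nonneg _)
      exact pow_eq_zero_iff (n := 2) (by norm_num) |>.mp this
    have h9 : (x - 1) * (x + 1) = 0 := by linear_combination h8
    rw [hre, Complex.norm_real]
    rcases mul_eq_zero.mp h9 with h | h
    · have : x = 1 := by linarith
      simp [this]
    · have : x = -1 := by linarith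
      simp [this]
  · -- r * conj r = 1
    have h5 : r * starRingEnd ℂ r = 1 := by linear_combination r * h4 - h1
    rw [Complex.mul_conj] at h5
    have h6 : Complex.normSq r = 1 := by exact_mod_cast h5
    have hsq : ‖r‖ ^ 2 = 1 := by rw [Complex.sq_norm, h6]
    nlinarith [norm_nonneg r, sq_nonneg (‖r‖ - 1), sq_nonneg (‖r‖ + 1)]

/-- Critical line locus: for `p > 1`, `μ = 1/2 + it`, `v ≥ (√p + 1)²/2`, every nonzero
complex solution of the mode equation `r + r⁻¹ - 2 = 2λ_μ/v` has modulus one. -/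
theorem stmt_5 (p : ℝ) (hp : 1 < p) (t : ℝ) (v : ℝ)
    (hv : (Real.sqrt p + 1) ^ 2 / 2 ≤ v)
    (r : ℂ) (hr : r ≠ 0)
    (heq : r + r⁻¹ - 2 =
      2 * ((p : ℂ) ^ ((1 / 2 : ℂ) + (t : ℂ) * Complex.I) +
        (p : ℂ) ^ (1 - ((1 / 2 : ℂ) + (t : ℂ) * Complex.I)) - p - 1) / (v : ℂ)) :
    ‖r‖ = 1 := by
  have hp0 : (0 : ℝ) < p := by linarith
  set z : ℂ := (1 / 2 : ℂ) + (t : ℂ) * Complex.I with hz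
  set W : ℂ := (p : ℂ) ^ z with hW
  have hne : (p : ℂ) ≠ 0 := by exact_mod_cast hp0.ne'
  have hlog : Complex.log (p : ℂ) = (Real.log p : ℂ) := (Complex.ofReal_log hp0.le).symm
  have hzc : starRingEnd ℂ z = 1 - z := by
    rw [hz]
    simp [map_add, map_mul, map_ofNat, map_inv₀, Complex.conj_I, Complex.conj_ofReal]
    ring
  -- conjugation fact
  have hconj : (p : ℂ) ^ (1 - z) = starRingEnd ℂ W := by
    rw [hW, Complex.cpow_def_of_ne_zero hne, Complex.cpow_def_of_ne_zero hne,
      ← Complex.exp_conj, map_mul, hlog, Complex.conj_ofReal, hzc]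
  -- modulus of W
  have habsW : ‖W‖ = Real.sqrt p := by
    rw [hW, Complex.norm_cpow_eq_rpow_re_of_pos hp0]
    have hre : z.re = 1 / 2 := by simp [hz]
    rw [hre, Real.sqrt_eq_rpow]
  have hre_bound : |W.re| ≤ Real.sqrt p := habsW ▸ Complex.abs_re_le_norm W
  obtain ⟨hb1, hb2⟩ := abs_le.mp hre_bound
  have hWc : W + starRingEnd ℂ W = 2 * (W.re : ℂ) := by
    rw [Complex.add_conj]; push_cast; ring
  have heq2 : r + r⁻¹ - 2 = 2 * (2 * (W.re : ℂ) - p - 1) / v := by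
    rw [hconj] at heq
    rw [heq, hWc]
  have heq' : r + r⁻¹ = ((2 + 2 * (2 * W.re - p - 1) / v : ℝ) : ℂ) := by
    push_cast
    linear_combination heq2
  -- bounds on the real constant
  have hv0 : (0 : ℝ) < v := lt_of_lt_of_le (by positivity) hv
  have hs : Real.sqrt p ^ 2 = p := Real.sq_sqrt hp0.le
  have hs0 : (0 : ℝ) ≤ Real.sqrt p := Real.sqrt_nonneg p
  have hc2 : 2 + 2 * (2 * W.re - p - 1) / v ≤ 2 := by
    have hnum : 2 * (2 * W.re - p - 1) ≤ 0 := by nlinarith [sq_nonneg (Real.sqrt p - 1)]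
    have := div_nonpos_of_nonpos_of_nonneg hnum hv0.le
    linarith
  have hc1 : -2 ≤ 2 + 2 * (2 * W.re - p - 1) / v := by
    have h4 : (-4 : ℝ) ≤ 2 * (2 * W.re - p - 1) / v := by
      rw [le_div_iff₀ hv0]
      nlinarith [sq_nonneg (Real.sqrt p + 1)]
    linarith
  exact aux_key _ hc1 hc2 r hr heq'
end

section
/- Let p > 1 be a real number, v ∈ ℝ with v ≠ 0, and μ ∈ ℂ, and set λ_μ := p^μ + p^{1−μ} − p − 1. If there exists r ∈ ℂ with |r| = 1 and r + r⁻¹ − 2 = 2λ_μ/v, then λ_μ is real and (Re λ_μ)·(Re λ_μ + 2v) ≤ 0. -/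
/-!
On the unit circle `r⁻¹ = conj r`, so the mode equation reads `2 (Re r - 1) = 2 λ / v`, i.e.
`λ = v (Re r - 1)` is real. Then `λ (λ + 2v) = v² ((Re r)² - 1) ≤ 0` because `|Re r| ≤ ‖r‖ = 1`.
-/

namespace Complex

theorem add_inv_of_norm_eq_one {r : ℂ} (hr : ‖r‖ = 1) : r + r⁻¹ = (2 * r.re : ℝ) := by
  rw [inv_eq_conj hr, add_conj]

theorem eq_ofReal_mul_re_sub_one_of_add_inv_sub_two {r c : ℂ} {v : ℝ} (hv : v ≠ 0)
    (hr : ‖r‖ = 1) (h : r + r⁻¹ - 2 = 2 * c / v) : c = (v * (r.re - 1) : ℝ) := by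
  have hvC : (v : ℂ) ≠ 0 := ofReal_ne_zero.mpr hv
  rw [add_inv_of_norm_eq_one hr, eq_div_iff hvC] at h
  push_cast at h ⊢
  linear_combination -h / 2

end Complex

theorem mul_sub_one_mul_add_two_mul_nonpos {a : ℝ} (ha : |a| ≤ 1) (v : ℝ) :
    v * (a - 1) * (v * (a - 1) + 2 * v) ≤ 0 := by
  have hsq : a ^ 2 ≤ 1 := (sq_le_one_iff_abs_le_one a).mpr ha
  calc v * (a - 1) * (v * (a - 1) + 2 * v) = v ^ 2 * (a ^ 2 - 1) := by ring
    _ ≤ 0 := mul_nonpos_of_nonneg_of_nonpos (sq_nonneg v) (by linarith)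

theorem stmt_6_general (p : ℝ) (v : ℝ) (hv : v ≠ 0) (μ : ℂ)
    (h : ∃ r : ℂ, ‖r‖ = 1 ∧
      r + r⁻¹ - 2 = 2 * ((p : ℂ) ^ μ + (p : ℂ) ^ (1 - μ) - p - 1) / (v : ℂ)) :
    ((p : ℂ) ^ μ + (p : ℂ) ^ (1 - μ) - p - 1).im = 0 ∧
    ((p : ℂ) ^ μ + (p : ℂ) ^ (1 - μ) - p - 1).re *
      (((p : ℂ) ^ μ + (p : ℂ) ^ (1 - μ) - p - 1).re + 2 * v) ≤ 0 := by
  obtain ⟨r, hr, hmode⟩ := h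
  rw [Complex.eq_ofReal_mul_re_sub_one_of_add_inv_sub_two hv hr hmode, Complex.ofReal_re,
    Complex.ofReal_im]
  have hre : |r.re| ≤ 1 := hr ▸ Complex.abs_re_le_norm r
  exact ⟨rfl, mul_sub_one_mul_add_two_mul_nonpos hre v⟩

/-- Unitary worldsheet time evolution forces `λ_μ` real with `λ_μ(λ_μ + 2v) ≤ 0`. -/
theorem stmt_6 (p : ℝ) (hp : 1 < p) (v : ℝ) (hv : v ≠ 0) (μ : ℂ)
    (h : ∃ r : ℂ, ‖r‖ = 1 ∧
      r + r⁻¹ - 2 = 2 * ((p : ℂ) ^ μ + (p : ℂ) ^ (1 - μ) - p - 1) / (v : ℂ)) :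
    ((p : ℂ) ^ μ + (p : ℂ) ^ (1 - μ) - p - 1).im = 0 ∧
    ((p : ℂ) ^ μ + (p : ℂ) ^ (1 - μ) - p - 1).re *
      (((p : ℂ) ^ μ + (p : ℂ) ^ (1 - μ) - p - 1).re + 2 * v) ≤ 0 :=
  stmt_6_general p v hv μ h
end

section
/- Let A be an associative unital algebra over ℂ, let S be a finite index set, let D be a type of spacetime indices, and let η : D → D → ℂ be symmetric (η a b = η b a). Let b, b† : S → D → A satisfy the canonical commutation relations: for all μ, ν ∈ S and a, a' ∈ D, b μ a · b† ν a' − b† ν a' · b μ a = (if μ = ν then η a a' else 0) · 1, while b μ a · b ν a' = b ν a' · b μ a and b† μ a · b† ν a' = b† ν a' · b† μ a. Define the angular momentum operators J a b := i · Σ_{μ ∈ S} (b† μ b · b μ a − b† μ a · b μ b). Then for all a, b, c, d ∈ D: J a b · J c d − J c d · J a b = i·(η a c · J b d − η a d · J b c − η b c · J a d + η b d · J a c). -/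
/-- The oscillator part of the angular momentum obeys the Lorentz part of the Poincaré
algebra: with canonical commutation relations `[b_μ^a, b_ν^{†a'}] = δ_{μν} η^{aa'}·1`
(all other commutators vanishing) and `J^{ab} := i Σ_μ (b_μ^{†b} b_μ^a − b_μ^{†a} b_μ^b)`,
one has `[J^{ab}, J^{cd}] = i(η^{ac}J^{bd} − η^{ad}J^{bc} − η^{bc}J^{ad} + η^{bd}J^{ac})`. -/
theorem stmt_15 {A : Type*} [Ring A] [Algebra ℂ A]
    {S : Type*} [Fintype S] [DecidableEq S] {D : Type*}
    (η : D → D → ℂ) (hη : ∀ a b, η a b = η b a)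
    (ann cre : S → D → A)
    (hcc : ∀ (μ ν : S) (a a' : D),
      ann μ a * cre ν a' - cre ν a' * ann μ a
        = algebraMap ℂ A (if μ = ν then η a a' else 0))
    (hann : ∀ (μ ν : S) (a a' : D), ann μ a * ann ν a' = ann ν a' * ann μ a)
    (hcre : ∀ (μ ν : S) (a a' : D), cre μ a * cre ν a' = cre ν a' * cre μ a)
    (J : D → D → A)
    (hJ : ∀ a b, J a b = Complex.I • ∑ μ : S, (cre μ b * ann μ a - cre μ a * ann μ b)) :
    ∀ a b c d : D,
      J a b * J c d - J c d * J a b =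
        Complex.I • (η a c • J b d - η a d • J b c - η b c • J a d + η b d • J a c) := by
  intro a b c d
  set K : D → D → A := fun x y => ∑ μ : S, cre μ y * ann μ x with hK
  -- commutation relation rewritten
  have hcc' : ∀ (μ ν : S) (x v : D),
      ann μ x * cre ν v = cre ν v * ann μ x + algebraMap ℂ A (if μ = ν then η x v else 0) := by
    intro μ ν x v
    have h := hcc μ ν x v
    linear_combination (norm := noncomm_ring) h
  -- per-term commutator
  have hterm : ∀ (μ ν : S) (x y u v : D),
      (cre μ y * ann μ x) * (cre ν v * ann ν u) - (cre ν v * ann ν u) * (cre μ y * ann μ x)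
      = (if μ = ν then η x v else 0) • (cre μ y * ann ν u)
        - (if ν = μ then η u y else 0) • (cre ν v * ann μ x) := by
    intro μ ν x y u v
    have h1 := hcc' μ ν x v
    have h2 := hcc' ν μ u y
    have e1 : (cre μ y * ann μ x) * (cre ν v * ann ν u)
        = cre ν v * cre μ y * (ann ν u * ann μ x)
          + (if μ = ν then η x v else 0) • (cre μ y * ann ν u) := by
      calc (cre μ y * ann μ x) * (cre ν v * ann ν u)
          = cre μ y * (ann μ x * cre ν v) * ann ν u := by noncomm_ring
        _ = cre μ y * (cre ν v * ann μ x + algebraMap ℂ A (if μ = ν then η x v else 0)) * ann ν u := by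
            rw [h1]
        _ = (cre μ y * cre ν v) * (ann μ x * ann ν u)
            + cre μ y * algebraMap ℂ A (if μ = ν then η x v else 0) * ann ν u := by noncomm_ring
        _ = cre ν v * cre μ y * (ann ν u * ann μ x)
            + (if μ = ν then η x v else 0) • (cre μ y * ann ν u) := by
            rw [hcre μ ν y v, hann μ ν x u, ← Algebra.commutes (if μ = ν then η x v else 0) (cre μ y),
              Algebra.smul_def]
            noncomm_ring
    have e2 : (cre ν v * ann ν u) * (cre μ y * ann μ x)
        = cre ν v * cre μ y * (ann ν u * ann μ x)
          + (if ν = μ then η u y else 0) • (cre ν v * ann μ x) := by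
      calc (cre ν v * ann ν u) * (cre μ y * ann μ x)
          = cre ν v * (ann ν u * cre μ y) * ann μ x := by noncomm_ring
        _ = cre ν v * (cre μ y * ann ν u + algebraMap ℂ A (if ν = μ then η u y else 0)) * ann μ x := by
            rw [h2]
        _ = cre ν v * cre μ y * (ann ν u * ann μ x)
            + cre ν v * algebraMap ℂ A (if ν = μ then η u y else 0) * ann μ x := by noncomm_ring
        _ = cre ν v * cre μ y * (ann ν u * ann μ x)
            + (if ν = μ then η u y else 0) • (cre ν v * ann μ x) := by
            rw [← Algebra.commutes (if ν = μ then η u y else 0) (cre ν v), Algebra.smul_def]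
            noncomm_ring
    rw [e1, e2]; abel
  -- commutator of K's
  have hcomm : ∀ x y u v : D,
      K x y * K u v - K u v * K x y = η x v • K u y - η u y • K x v := by
    intro x y u v
    have expand1 : K x y * K u v = ∑ μ : S, ∑ ν : S, (cre μ y * ann μ x) * (cre ν v * ann ν u) := by
      rw [hK]; rw [Finset.sum_mul_sum]
    have expand2 : K u v * K x y = ∑ μ : S, ∑ ν : S, (cre ν v * ann ν u) * (cre μ y * ann μ x) := by
      rw [hK]; rw [Finset.sum_mul_sum]; rw [Finset.sum_comm]
    rw [expand1, expand2, ← Finset.sum_sub_distrib]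
    have : ∀ μ : S, (∑ ν : S, (cre μ y * ann μ x) * (cre ν v * ann ν u))
        - (∑ ν : S, (cre ν v * ann ν u) * (cre μ y * ann μ x))
        = η x v • (cre μ y * ann μ u) - η u y • (cre μ v * ann μ x) := by
      intro μ
      rw [← Finset.sum_sub_distrib]
      have : (∑ ν : S, ((cre μ y * ann μ x) * (cre ν v * ann ν u)
          - (cre ν v * ann ν u) * (cre μ y * ann μ x)))
          = ∑ ν : S, ((if μ = ν then η x v • (cre μ y * ann ν u) else 0)
            - (if μ = ν then η u y • (cre ν v * ann μ x) else 0)) := by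
        refine Finset.sum_congr rfl fun ν _ => ?_
        rw [hterm μ ν x y u v]
        by_cases h : μ = ν
        · simp [h]
        · simp [h, Ne.symm h]
      rw [this, Finset.sum_sub_distrib, Finset.sum_ite_eq, Finset.sum_ite_eq]
      simp
    rw [Finset.sum_congr rfl fun μ _ => this μ, Finset.sum_sub_distrib, ← Finset.smul_sum,
      ← Finset.smul_sum]
  have hJK : ∀ x y : D, J x y = Complex.I • (K x y - K y x) := by
    intro x y
    rw [hJ, Finset.sum_sub_distrib]
  rw [hJK a b, hJK c d, hJK b d, hJK b c, hJK a d, hJK a c]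
  have key : (K a b - K b a) * (K c d - K d c) - (K c d - K d c) * (K a b - K b a)
      = (K a b * K c d - K c d * K a b) - (K a b * K d c - K d c * K a b)
        - (K b a * K c d - K c d * K b a) + (K b a * K d c - K d c * K b a) := by
    noncomm_ring
  have lhs : Complex.I • (K a b - K b a) * (Complex.I • (K c d - K d c))
      - Complex.I • (K c d - K d c) * (Complex.I • (K a b - K b a))
      = (Complex.I * Complex.I) • ((K a b - K b a) * (K c d - K d c)
        - (K c d - K d c) * (K a b - K b a)) := by
    rw [smul_mul_smul_comm, smul_mul_smul_comm, smul_sub]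
  rw [lhs, key, hcomm a b c d, hcomm a b d c, hcomm b a c d, hcomm b a d c,
    Complex.I_mul_I]
  rw [hη c b, hη d b, hη c a, hη d a]
  match_scalars <;>
    first
      | ring1
      | linear_combination (η a d) * Complex.I_sq
      | linear_combination (-(η a d)) * Complex.I_sq
      | linear_combination (η b c) * Complex.I_sq
      | linear_combination (-(η b c)) * Complex.I_sq
      | linear_combination (η a c) * Complex.I_sq
      | linear_combination (-(η a c)) * Complex.I_sq
      | linear_combination (η b d) * Complex.I_sq
      | linear_combination (-(η b d)) * Complex.I_sq
end

section
/- Let p > 1 be a real number and ν ∈ ℂ. Then (1 − p^{ν−1})·(1 − p^{−ν}) = (1 + p − p^ν − p^{1−ν})/p, where all powers are complex powers of the positive real base p. Consequently the p-adic mass squared of the first excited p2-brane level at potential coefficient v_p = 8p, namely (2/(1−p))·√(2/v_p)·√(1 + p − p^ν − p^{1−ν}), equals (1/(1−p))·√((1 − p^{ν−1})(1 − p^{−ν})), i.e. the local Euler factor of ζ(−1)/√(ζ(ν)ζ(1−ν)). -/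
lemma mul_ofReal_cpow_half (c : ℝ) (hc : 0 < c) (X : ℂ) :
    (X * (c : ℂ)) ^ ((1 : ℂ) / 2) = X ^ ((1 : ℂ) / 2) * (c : ℂ) ^ ((1 : ℂ) / 2) := by
  rcases eq_or_ne X 0 with rfl | hX
  · simp [Complex.zero_cpow (by norm_num : (1:ℂ)/2 ≠ 0)]
  have hc' : (c : ℂ) ≠ 0 := Complex.ofReal_ne_zero.mpr hc.ne'
  rw [Complex.cpow_def_of_ne_zero (mul_ne_zero hX hc'),
    Complex.cpow_def_of_ne_zero hX, Complex.cpow_def_of_ne_zero hc',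
    Complex.log_mul_ofReal c hc X hX, ← Complex.exp_add]
  rw [← Complex.ofReal_log hc.le]
  congr 1; ring

/-- Local Euler factor identity: `(1 - p^{ν-1})(1 - p^{-ν}) = (1 + p - p^ν - p^{1-ν})/p`,
and hence at `v_p = 8p` the p-adic mass squared of the first excited level equals
`(1/(1-p))·√((1 - p^{ν-1})(1 - p^{-ν}))`. -/
theorem stmt_16 (p : ℝ) (hp : 1 < p) (ν : ℂ) :
    (1 - (p : ℂ) ^ (ν - 1)) * (1 - (p : ℂ) ^ (-ν))
      = (1 + p - (p : ℂ) ^ ν - (p : ℂ) ^ (1 - ν)) / p ∧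
    (2 / (1 - (p : ℂ))) * ((2 / (8 * (p : ℂ))) ^ ((1 : ℂ) / 2)) *
        ((1 + p - (p : ℂ) ^ ν - (p : ℂ) ^ (1 - ν)) ^ ((1 : ℂ) / 2))
      = (1 / (1 - (p : ℂ))) *
        (((1 - (p : ℂ) ^ (ν - 1)) * (1 - (p : ℂ) ^ (-ν))) ^ ((1 : ℂ) / 2)) := by
  have hp0 : (0:ℝ) < p := lt_trans one_pos hp
  have hpc : (p : ℂ) ≠ 0 := Complex.ofReal_ne_zero.mpr hp0.ne'
  have hpow : (p : ℂ) ^ (ν - 1) = (p : ℂ) ^ ν / p := by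
    rw [Complex.cpow_sub _ _ hpc, Complex.cpow_one]
  have hpow2 : (p : ℂ) ^ (-ν) = 1 / (p : ℂ) ^ ν := by
    rw [Complex.cpow_neg, one_div]
  have hpow3 : (p : ℂ) ^ (1 - ν) = p / (p : ℂ) ^ ν := by
    rw [Complex.cpow_sub _ _ hpc, Complex.cpow_one]
  have hν : (p : ℂ) ^ ν ≠ 0 := by simp [Complex.cpow_eq_zero_iff, hpc]
  have h1 : (1 - (p : ℂ) ^ (ν - 1)) * (1 - (p : ℂ) ^ (-ν))
      = (1 + p - (p : ℂ) ^ ν - (p : ℂ) ^ (1 - ν)) / p := by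
    rw [hpow, hpow2, hpow3]
    field_simp
    ring
  refine ⟨h1, ?_⟩
  rw [h1]
  have hinv : (0:ℝ) < p⁻¹ := inv_pos.mpr hp0
  have e1 : (1 + (p:ℂ) - (p : ℂ) ^ ν - (p : ℂ) ^ (1 - ν)) / p
      = (1 + (p:ℂ) - (p : ℂ) ^ ν - (p : ℂ) ^ (1 - ν)) * ((p⁻¹ : ℝ) : ℂ) := by
    push_cast; ring
  have e2 : 2 / (8 * (p:ℂ)) = ((1/4 : ℝ) : ℂ) * ((p⁻¹ : ℝ) : ℂ) := by
    push_cast; field_simp; ring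
  have r4 : (1/4:ℝ) ^ ((1:ℝ)/2) = 1/2 := by
    rw [show (1/4:ℝ) = (1/2)^(2:ℕ) by norm_num, ← Real.rpow_natCast ((1:ℝ)/2) 2,
      ← Real.rpow_mul (by norm_num)]
    norm_num
  have quarter : ((1/4 : ℝ) : ℂ) ^ ((1:ℂ)/2) = 1/2 := by
    have h12 : ((1:ℂ)/2) = (((1:ℝ)/2 : ℝ) : ℂ) := by push_cast; ring
    rw [h12, ← Complex.ofReal_cpow (by norm_num : (0:ℝ) ≤ 1/4), r4]
  rw [e1, e2, mul_ofReal_cpow_half _ hinv, mul_ofReal_cpow_half _ hinv, quarter]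
  ring
end
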